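/- Assume λ ≤ δ√(V₁V₂) for some δ ∈ (0,1) and (3+α)/3 ≤ p ≤ q ≤ 3+α. Then for every (u,v) ∈ H and every t > 0: I(u,v) = I(u^t,v^t) + ((1−t⁸)/8)J(u,v) + ((1−t⁴)²/4)(a₁‖∇u‖₂² + a₂‖∇v‖₂²) + [((p+α+3)/(8p))(1−t⁸) − (1−t^{2(p+α+3)})/(2p)]·μ∫(I_α∗|u|^p)|u|^p dx + [((q+α+3)/(8q))(1−t⁸) − (1−t^{2(q+α+3)})/(2q)]·ν∫(I_α∗|v|^q)|v|^q dx. In particular, I(u,v) ≥ I(u^t,v^t) + ((1−t⁸)/8)J(u,v) + ((1−t⁴)²/4)(a₁‖∇u‖₂² + a₂‖∇v‖₂²) for all t > 0. -/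

import Mathlib

noncomputable section
open MeasureTheory Filter Topology
open scoped InnerProductSpace

abbrev E3 : Type := EuclideanSpace ℝ (Fin 3)

def riesz3 (α : ℝ) (x : E3) : ℝ :=
  Real.Gamma ((3 - α) / 2) /
    (Real.Gamma (α / 2) * Real.pi ^ ((3 : ℝ) / 2) * (2 : ℝ) ^ α * ‖x‖ ^ (3 - α))

def choq (α p : ℝ) (u : E3 → ℝ) : ℝ :=
  ∫ x : E3, (∫ y : E3, riesz3 α (x - y) * |u y| ^ p) * |u x| ^ p

def l2sq (u : E3 → ℝ) : ℝ := ∫ x : E3, u x ^ 2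

def gradSq (g : E3 → E3) : ℝ := ∫ x : E3, ‖g x‖ ^ 2

def pairInt (u v : E3 → ℝ) : ℝ := ∫ x : E3, u x * v x

def IsWeakGradient (u : E3 → ℝ) (g : E3 → E3) : Prop :=
  ∀ φ : E3 → ℝ, ContDiff ℝ (⊤ : ℕ∞) φ → HasCompactSupport φ →
    ∫ x : E3, u x • gradient φ x = - ∫ x : E3, φ x • g x

def MemH1 (u : E3 → ℝ) (g : E3 → E3) : Prop :=
  MemLp u 2 volume ∧ MemLp g 2 volume ∧ IsWeakGradient u g

def Nontriv (u v : E3 → ℝ) : Prop :=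
  ¬ (u =ᵐ[volume] (fun _ => (0 : ℝ)) ∧ v =ᵐ[volume] (fun _ => (0 : ℝ)))

def energy (a₁ a₂ b₁ b₂ V₁ V₂ lam μ ν α p q : ℝ)
    (u : E3 → ℝ) (gu : E3 → E3) (v : E3 → ℝ) (gv : E3 → E3) : ℝ :=
  (1/2) * (a₁ * gradSq gu + a₂ * gradSq gv)
    + (1/2) * (V₁ * l2sq u + V₂ * l2sq v)
    + (1/4) * (b₁ * gradSq gu ^ 2 + b₂ * gradSq gv ^ 2)
    - μ / (2*p) * choq α p u - ν / (2*q) * choq α q v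
    - lam * pairInt u v

def Jfun (a₁ a₂ b₁ b₂ V₁ V₂ lam μ ν α p q : ℝ)
    (u : E3 → ℝ) (gu : E3 → E3) (v : E3 → ℝ) (gv : E3 → E3) : ℝ :=
  2 * (a₁ * gradSq gu + a₂ * gradSq gv)
    + 4 * (V₁ * l2sq u + V₂ * l2sq v)
    + 2 * (b₁ * gradSq gu ^ 2 + b₂ * gradSq gv ^ 2)
    - (p + α + 3) / p * μ * choq α p u
    - (q + α + 3) / q * ν * choq α q v
    - 8 * lam * pairInt u v

def IsWeakSolution (a₁ a₂ b₁ b₂ V₁ V₂ lam μ ν α p q : ℝ)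
    (u : E3 → ℝ) (gu : E3 → E3) (v : E3 → ℝ) (gv : E3 → E3) : Prop :=
  ∀ φ ψ : E3 → ℝ, ContDiff ℝ (⊤ : ℕ∞) φ → HasCompactSupport φ →
    ContDiff ℝ (⊤ : ℕ∞) ψ → HasCompactSupport ψ →
    a₁ * (∫ x : E3, ⟪gu x, gradient φ x⟫_ℝ)
      + a₂ * (∫ x : E3, ⟪gv x, gradient ψ x⟫_ℝ)
      + V₁ * (∫ x : E3, u x * φ x) + V₂ * (∫ x : E3, v x * ψ x)
      + b₁ * gradSq gu * (∫ x : E3, ⟪gu x, gradient φ x⟫_ℝ)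
      + b₂ * gradSq gv * (∫ x : E3, ⟪gv x, gradient ψ x⟫_ℝ)
      - μ * (∫ x : E3, (∫ y : E3, riesz3 α (x - y) * |u y| ^ p)
              * (|u x| ^ (p - 2) * u x) * φ x)
      - ν * (∫ x : E3, (∫ y : E3, riesz3 α (x - y) * |v y| ^ q)
              * (|v x| ^ (q - 2) * v x) * ψ x)
      - lam * (∫ x : E3, u x * ψ x) - lam * (∫ x : E3, v x * φ x) = 0

def scaleFun (t : ℝ) (w : E3 → ℝ) : E3 → ℝ := fun x => t * w ((t ^ 2)⁻¹ • x)

def scaleGrad (t : ℝ) (g : E3 → E3) : E3 → E3 := fun x => t⁻¹ • g ((t ^ 2)⁻¹ • x)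

lemma integral_inv_smul_E3 (f : E3 → ℝ) {c : ℝ} (hc : 0 < c) :
    (∫ x : E3, f (c⁻¹ • x)) = c ^ 3 * ∫ x : E3, f x := by
  rw [MeasureTheory.Measure.integral_comp_inv_smul_of_nonneg volume f hc.le]
  simp [finrank_euclideanSpace, smul_eq_mul]

lemma riesz3_nonneg {α : ℝ} (hα1 : 0 < α) (hα2 : α < 3) (x : E3) : 0 ≤ riesz3 α x := by
  unfold riesz3
  apply div_nonneg (Real.Gamma_pos_of_pos (by linarith)).le
  have h1 := Real.Gamma_pos_of_pos (half_pos hα1)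
  have h2 : (0:ℝ) < Real.pi ^ ((3:ℝ)/2) := Real.rpow_pos_of_pos Real.pi_pos _
  have h3 : (0:ℝ) < (2:ℝ) ^ α := Real.rpow_pos_of_pos (by norm_num) _
  have h4 : (0:ℝ) ≤ ‖x‖ ^ (3 - α) := Real.rpow_nonneg (norm_nonneg x) _
  positivity

lemma choq_nonneg {α p : ℝ} (hα1 : 0 < α) (hα2 : α < 3) (u : E3 → ℝ) :
    0 ≤ choq α p u := by
  apply integral_nonneg
  intro x
  apply mul_nonneg _ (Real.rpow_nonneg (abs_nonneg _) _)
  apply integral_nonneg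
  intro y
  exact mul_nonneg (riesz3_nonneg hα1 hα2 _) (Real.rpow_nonneg (abs_nonneg _) _)

lemma riesz3_smul {α c : ℝ} (hc : 0 < c) (z : E3) :
    riesz3 α (c • z) = (c ^ (3 - α))⁻¹ * riesz3 α z := by
  unfold riesz3
  rw [norm_smul, Real.norm_eq_abs, abs_of_pos hc,
    Real.mul_rpow hc.le (norm_nonneg z)]
  rcases eq_or_ne (‖z‖ ^ (3 - α)) 0 with h | h
  · simp [h]
  · have hck : c ^ (3 - α) ≠ 0 := (Real.rpow_pos_of_pos hc _).ne'
    field_simp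

lemma l2sq_scale {t : ℝ} (ht : 0 < t) (u : E3 → ℝ) :
    l2sq (scaleFun t u) = t ^ (8 : ℕ) * l2sq u := by
  have hc : (0:ℝ) < t ^ 2 := by positivity
  unfold l2sq scaleFun
  simp_rw [mul_pow]
  rw [MeasureTheory.integral_const_mul]
  have h2 : (∫ x : E3, u ((t ^ 2 : ℝ)⁻¹ • x) ^ 2) = (t ^ 2) ^ 3 * ∫ x : E3, u x ^ 2 :=
    integral_inv_smul_E3 (fun x => u x ^ 2) hc
  rw [h2]; ring

lemma gradSq_scale {t : ℝ} (ht : 0 < t) (g : E3 → E3) :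
    gradSq (scaleGrad t g) = t ^ (4 : ℕ) * gradSq g := by
  have hc : (0:ℝ) < t ^ 2 := by positivity
  unfold gradSq scaleGrad
  simp_rw [norm_smul, Real.norm_eq_abs, abs_inv, abs_of_pos ht, mul_pow]
  rw [MeasureTheory.integral_const_mul]
  have h2 : (∫ x : E3, ‖g ((t ^ 2 : ℝ)⁻¹ • x)‖ ^ 2) = (t ^ 2) ^ 3 * ∫ x : E3, ‖g x‖ ^ 2 :=
    integral_inv_smul_E3 (fun x => ‖g x‖ ^ 2) hc
  rw [h2]
  field_simp

lemma pairInt_scale {t : ℝ} (ht : 0 < t) (u v : E3 → ℝ) :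
    pairInt (scaleFun t u) (scaleFun t v) = t ^ (8 : ℕ) * pairInt u v := by
  have hc : (0:ℝ) < t ^ 2 := by positivity
  unfold pairInt scaleFun
  simp_rw [show ∀ a b : ℝ, (t * a) * (t * b) = t ^ 2 * (a * b) from fun a b => by ring]
  rw [MeasureTheory.integral_const_mul]
  have h2 : (∫ x : E3, u ((t ^ 2 : ℝ)⁻¹ • x) * v ((t ^ 2 : ℝ)⁻¹ • x))
      = (t ^ 2) ^ 3 * ∫ x : E3, u x * v x :=
    integral_inv_smul_E3 (fun x => u x * v x) hc
  rw [h2]; ring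

lemma choq_scale {α p t : ℝ} (hα1 : 0 < α) (ht : 0 < t) (u : E3 → ℝ) :
    choq α p (scaleFun t u) = t ^ (2 * (p + α + 3)) * choq α p u := by
  have hc : (0:ℝ) < t ^ 2 := by positivity
  have habs : ∀ w : ℝ, |t * w| ^ p = t ^ p * |w| ^ p := fun w => by
    rw [abs_mul, abs_of_pos ht, Real.mul_rpow ht.le (abs_nonneg w)]
  unfold choq scaleFun
  have hinner : ∀ x : E3, (∫ y : E3, riesz3 α (x - y) * |t * u ((t ^ 2 : ℝ)⁻¹ • y)| ^ p)
      = (t ^ 2) ^ 3 * t ^ p * ∫ y : E3, riesz3 α (x - (t ^ 2 : ℝ) • y) * |u y| ^ p := by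
    intro x
    have hpt : ∀ y : E3, riesz3 α (x - y) * |t * u ((t ^ 2 : ℝ)⁻¹ • y)| ^ p
        = t ^ p * (riesz3 α (x - (t ^ 2 : ℝ) • ((t ^ 2 : ℝ)⁻¹ • y)) * |u ((t ^ 2 : ℝ)⁻¹ • y)| ^ p) := by
      intro y
      rw [habs, smul_inv_smul₀ hc.ne']
      ring
    simp_rw [hpt]
    rw [MeasureTheory.integral_const_mul]
    have h2 : (∫ y : E3, riesz3 α (x - (t ^ 2 : ℝ) • ((t ^ 2 : ℝ)⁻¹ • y)) * |u ((t ^ 2 : ℝ)⁻¹ • y)| ^ p)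
        = (t ^ 2) ^ 3 * ∫ y : E3, riesz3 α (x - (t ^ 2 : ℝ) • y) * |u y| ^ p :=
      integral_inv_smul_E3 (fun y => riesz3 α (x - (t ^ 2 : ℝ) • y) * |u y| ^ p) hc
    rw [h2]; ring
  simp_rw [hinner, habs]
  have houter : ∀ x : E3,
      ((t ^ 2) ^ 3 * t ^ p * ∫ y : E3, riesz3 α (x - (t ^ 2 : ℝ) • y) * |u y| ^ p)
        * (t ^ p * |u ((t ^ 2 : ℝ)⁻¹ • x)| ^ p)
      = ((t ^ 2) ^ 3 * (t ^ p * t ^ p)) *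
          ((∫ y : E3, riesz3 α ((t ^ 2 : ℝ) • ((t ^ 2 : ℝ)⁻¹ • x) - (t ^ 2 : ℝ) • y) * |u y| ^ p)
            * |u ((t ^ 2 : ℝ)⁻¹ • x)| ^ p) := by
    intro x
    rw [smul_inv_smul₀ hc.ne']
    ring
  simp_rw [houter]
  rw [MeasureTheory.integral_const_mul]
  have h3 : (∫ x : E3, (∫ y : E3, riesz3 α ((t ^ 2 : ℝ) • ((t ^ 2 : ℝ)⁻¹ • x) - (t ^ 2 : ℝ) • y) * |u y| ^ p)
        * |u ((t ^ 2 : ℝ)⁻¹ • x)| ^ p)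
      = (t ^ 2) ^ 3 * ∫ x : E3, (∫ y : E3, riesz3 α ((t ^ 2 : ℝ) • x - (t ^ 2 : ℝ) • y) * |u y| ^ p)
        * |u x| ^ p :=
    integral_inv_smul_E3
      (fun x => (∫ y : E3, riesz3 α ((t ^ 2 : ℝ) • x - (t ^ 2 : ℝ) • y) * |u y| ^ p) * |u x| ^ p) hc
  rw [h3]
  have hr : ∀ x y : E3, riesz3 α ((t ^ 2 : ℝ) • x - (t ^ 2 : ℝ) • y)
      = ((t ^ 2 : ℝ) ^ (3 - α))⁻¹ * riesz3 α (x - y) := by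
    intro x y
    rw [← smul_sub]
    exact riesz3_smul hc _
  simp_rw [hr, mul_assoc, MeasureTheory.integral_const_mul]
  simp_rw [mul_assoc, MeasureTheory.integral_const_mul]
  have hconst : (t ^ 2) ^ 3 * (t ^ p * t ^ p) * ((t ^ 2) ^ 3 * (((t ^ 2 : ℝ) ^ (3 - α))⁻¹))
      = t ^ (2 * (p + α + 3)) := by
    have e1 : ((t : ℝ) ^ 2) ^ 3 = t ^ ((6 : ℕ) : ℝ) := by
      rw [Real.rpow_natCast]; ring
    have e2 : ((t : ℝ) ^ 2 : ℝ) ^ (3 - α) = t ^ (2 * (3 - α)) := by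
      rw [← Real.rpow_natCast t 2, ← Real.rpow_mul ht.le]
      norm_num
    rw [e1, e2, ← Real.rpow_neg ht.le, ← Real.rpow_add ht, ← Real.rpow_add ht,
      ← Real.rpow_add ht, ← Real.rpow_add ht]
    congr 1
    push_cast
    ring
  rw [← hconst]
  ring

lemma bern_coef {α r t : ℝ} (hα1 : 0 < α) (hr : 0 < r) (hra : 4 ≤ r + α + 3) (ht : 0 < t) :
    0 ≤ (r + α + 3) / (8 * r) * (1 - t ^ (8 : ℕ)) - (1 - t ^ (2 * (r + α + 3))) / (2 * r) := by
  have hb : (1:ℝ) ≤ (r + α + 3) / 4 := by linarith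
  have hs : (-1:ℝ) ≤ t ^ (8 : ℕ) - 1 := by
    have := pow_nonneg ht.le 8; linarith
  have hber := one_add_mul_self_le_rpow_one_add hs hb
  have h8 : ((1:ℝ) + (t ^ (8 : ℕ) - 1)) ^ ((r + α + 3) / 4) = t ^ (2 * (r + α + 3)) := by
    rw [show (1:ℝ) + (t ^ (8 : ℕ) - 1) = t ^ (8 : ℕ) by ring, ← Real.rpow_natCast t 8,
      ← Real.rpow_mul ht.le]
    congr 1
    push_cast
    ring
  rw [h8] at hber
  have key : 0 ≤ (r + α + 3) / 4 * (1 - t ^ (8 : ℕ)) - (1 - t ^ (2 * (r + α + 3))) := by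
    nlinarith [hber]
  have heq : (r + α + 3) / (8 * r) * (1 - t ^ (8 : ℕ)) - (1 - t ^ (2 * (r + α + 3))) / (2 * r)
      = ((r + α + 3) / 4 * (1 - t ^ (8 : ℕ)) - (1 - t ^ (2 * (r + α + 3)))) / (2 * r) := by
    field_simp
    ring
  rw [heq]
  exact div_nonneg key (by linarith)

/-- **Key energy identity and inequality along the fibering map.** -/
theorem energy_identity_scaling
    (a₁ a₂ b₁ b₂ V₁ V₂ lam μ ν α p q δ : ℝ)
    (ha₁ : 0 < a₁) (ha₂ : 0 < a₂) (hb₁ : 0 < b₁) (hb₂ : 0 < b₂)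
    (hV₁ : 0 < V₁) (hV₂ : 0 < V₂) (hlam : 0 < lam)
    (hμ : 0 < μ) (hν : 0 < ν)
    (hα : 0 < α ∧ α < 3)
    (hδ : 0 < δ ∧ δ < 1) (hlamδ : lam ≤ δ * Real.sqrt (V₁ * V₂))
    (hp : (3 + α) / 3 ≤ p) (hpq : p ≤ q) (hq : q ≤ 3 + α)
    (u : E3 → ℝ) (gu : E3 → E3) (v : E3 → ℝ) (gv : E3 → E3)
    (hu : MemH1 u gu) (hv : MemH1 v gv)
    (t : ℝ) (ht : 0 < t) :
    energy a₁ a₂ b₁ b₂ V₁ V₂ lam μ ν α p q u gu v gv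
      = energy a₁ a₂ b₁ b₂ V₁ V₂ lam μ ν α p q
          (scaleFun t u) (scaleGrad t gu) (scaleFun t v) (scaleGrad t gv)
        + (1 - t ^ (8 : ℕ)) / 8 * Jfun a₁ a₂ b₁ b₂ V₁ V₂ lam μ ν α p q u gu v gv
        + (1 - t ^ (4 : ℕ)) ^ (2 : ℕ) / 4 * (a₁ * gradSq gu + a₂ * gradSq gv)
        + ((p + α + 3) / (8 * p) * (1 - t ^ (8 : ℕ))
            - (1 - t ^ (2 * (p + α + 3))) / (2 * p)) * (μ * choq α p u)
        + ((q + α + 3) / (8 * q) * (1 - t ^ (8 : ℕ))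
            - (1 - t ^ (2 * (q + α + 3))) / (2 * q)) * (ν * choq α q v) ∧
    energy a₁ a₂ b₁ b₂ V₁ V₂ lam μ ν α p q u gu v gv
      ≥ energy a₁ a₂ b₁ b₂ V₁ V₂ lam μ ν α p q
          (scaleFun t u) (scaleGrad t gu) (scaleFun t v) (scaleGrad t gv)
        + (1 - t ^ (8 : ℕ)) / 8 * Jfun a₁ a₂ b₁ b₂ V₁ V₂ lam μ ν α p q u gu v gv
        + (1 - t ^ (4 : ℕ)) ^ (2 : ℕ) / 4 * (a₁ * gradSq gu + a₂ * gradSq gv) := by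
  obtain ⟨hα1, hα2⟩ := hα
  have hp0 : 0 < p := lt_of_lt_of_le (by positivity) hp
  have hq0 : 0 < q := hp0.trans_le hpq
  have hpa : 4 ≤ p + α + 3 := by linarith [hp, hα1]
  have hqa : 4 ≤ q + α + 3 := by linarith
  have hGu := gradSq_scale ht gu
  have hGv := gradSq_scale ht gv
  have hLu := l2sq_scale ht u
  have hLv := l2sq_scale ht v
  have hPI := pairInt_scale ht u v
  have hCp := choq_scale (p := p) hα1 ht u
  have hCq := choq_scale (p := q) hα1 ht v
  have hp' : p ≠ 0 := hp0.ne'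
  have hq' : q ≠ 0 := hq0.ne'
  have hmain : energy a₁ a₂ b₁ b₂ V₁ V₂ lam μ ν α p q u gu v gv
      = energy a₁ a₂ b₁ b₂ V₁ V₂ lam μ ν α p q
          (scaleFun t u) (scaleGrad t gu) (scaleFun t v) (scaleGrad t gv)
        + (1 - t ^ (8 : ℕ)) / 8 * Jfun a₁ a₂ b₁ b₂ V₁ V₂ lam μ ν α p q u gu v gv
        + (1 - t ^ (4 : ℕ)) ^ (2 : ℕ) / 4 * (a₁ * gradSq gu + a₂ * gradSq gv)
        + ((p + α + 3) / (8 * p) * (1 - t ^ (8 : ℕ))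
            - (1 - t ^ (2 * (p + α + 3))) / (2 * p)) * (μ * choq α p u)
        + ((q + α + 3) / (8 * q) * (1 - t ^ (8 : ℕ))
            - (1 - t ^ (2 * (q + α + 3))) / (2 * q)) * (ν * choq α q v) := by
    simp only [energy, Jfun, hGu, hGv, hLu, hLv, hPI, hCp, hCq]
    field_simp
    ring
  refine ⟨hmain, ?_⟩
  rw [ge_iff_le, hmain]
  have hcp := bern_coef hα1 hp0 hpa ht
  have hcq := bern_coef hα1 hq0 hqa ht
  have h1 : 0 ≤ ((p + α + 3) / (8 * p) * (1 - t ^ (8 : ℕ))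
      - (1 - t ^ (2 * (p + α + 3))) / (2 * p)) * (μ * choq α p u) :=
    mul_nonneg hcp (mul_nonneg hμ.le (choq_nonneg hα1 hα2 u))
  have h2 : 0 ≤ ((q + α + 3) / (8 * q) * (1 - t ^ (8 : ℕ))
      - (1 - t ^ (2 * (q + α + 3))) / (2 * q)) * (ν * choq α q v) :=
    mul_nonneg hcq (mul_nonneg hν.le (choq_nonneg hα1 hα2 v))
  linarith

end
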